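/- arXiv:2407.05260 — 3 statements merged into one kernel-verified Lean document; each statement's English description precedes it below -/
import Mathlib

section
/- For every ε ∈ (0,1) and every v > 0 and w > 0, there exists r > √v·Φ⁻¹(ε) such that 𝒦(r/√v, w) ≤ ε, where 𝒦(r,V) is the infimum of E[Φ(Π)] over all real random variables Π supported on at most 3 points with E[Π] = r and Var(Π) ≤ V. (This is the content of Theorem 2 after applying the known characterizations r_mv(ε,Γ,V) = max{r : 𝒦(r/√V(Γ), C′(Γ)²V/V(Γ)) ≤ ε} and r_as(ε,Γ) = √V(Γ)·Φ⁻¹(ε).) -/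
/-!
A two-point law with mass `1 - δ` at `x - h` and mass `δ` far to the right has mean `x + h`
and variance about `4h²/δ`; taking `δ = 4h²/w` meets the variance budget `w`. Its value of
`E[Φ(Π)]` is at most `Φ(x - h) + δ`, and since `Φ(x) - Φ(x - h)` is of order `h` while `δ` is of
order `h²`, for small `h` this is at most `Φ(x)`. With `x = Φ⁻¹(ε)` the mean `x + h` exceeds
`Φ⁻¹(ε)` while `𝒦 ≤ ε`.
-/

noncomputable section

/-- The standard normal CDF. -/
def stdNormalCDF (x : ℝ) : ℝ :=
  ∫ t in Set.Iic x, Real.exp (-t ^ 2 / 2) / Real.sqrt (2 * Real.pi)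

/-- `𝒦(r,V)`: the infimum of `E[Φ(Π)]` over real random variables `Π` supported on at most
three points (represented by their weights `p` and atoms `x`) with `E[Π] = r` and
`Var(Π) = E[Π²] − r² ≤ V`. -/
def Kfun (r V : ℝ) : ℝ :=
  sInf {e : ℝ | ∃ p x : Fin 3 → ℝ,
    (∀ i, 0 ≤ p i) ∧ (∑ i, p i = 1) ∧
    (∑ i, p i * x i = r) ∧ (∑ i, p i * x i ^ 2 - r ^ 2 ≤ V) ∧
    e = ∑ i, p i * stdNormalCDF (x i)}

open MeasureTheory ProbabilityTheory Set

lemma stdNormalCDF_eq_setIntegral (x : ℝ) :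
    stdNormalCDF x = ∫ t in Iic x, gaussianPDFReal 0 1 t := by
  unfold stdNormalCDF
  congr 1 with t
  simp [gaussianPDFReal, div_eq_inv_mul]

lemma stdNormalCDF_nonneg (x : ℝ) : 0 ≤ stdNormalCDF x := by
  rw [stdNormalCDF_eq_setIntegral]
  exact setIntegral_nonneg measurableSet_Iic fun t _ ↦ gaussianPDFReal_nonneg 0 1 t

lemma stdNormalCDF_le_one (x : ℝ) : stdNormalCDF x ≤ 1 := by
  rw [stdNormalCDF_eq_setIntegral, ← integral_gaussianPDFReal_eq_one 0 one_ne_zero]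
  exact setIntegral_le_integral (integrable_gaussianPDFReal 0 1)
    (ae_of_all _ (gaussianPDFReal_nonneg 0 1))

lemma gaussianPDFReal_zero_one_le_of_abs_le {s t : ℝ} (h : |t| ≤ s) :
    gaussianPDFReal 0 1 s ≤ gaussianPDFReal 0 1 t := by
  have hts : t ^ 2 ≤ s ^ 2 := sq_le_sq' (abs_le.1 h).1 (abs_le.1 h).2
  simp only [gaussianPDFReal, NNReal.coe_one, mul_one, sub_zero]
  gcongr

lemma stdNormalCDF_sub_eq_setIntegral {x y : ℝ} (hxy : x ≤ y) :
    stdNormalCDF y - stdNormalCDF x = ∫ t in Ioc x y, gaussianPDFReal 0 1 t := by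
  rw [stdNormalCDF_eq_setIntegral, stdNormalCDF_eq_setIntegral,
    intervalIntegral.integral_Iic_sub_Iic (integrable_gaussianPDFReal 0 1).integrableOn
      (integrable_gaussianPDFReal 0 1).integrableOn, intervalIntegral.integral_of_le hxy]

/-- On `[x, y] ⊆ [-M, M]` the density is at least its value at `M`. -/
lemma mul_gaussianPDFReal_le_stdNormalCDF_sub {x y M : ℝ} (hxy : x ≤ y) (hx : -M ≤ x)
    (hy : y ≤ M) : (y - x) * gaussianPDFReal 0 1 M ≤ stdNormalCDF y - stdNormalCDF x := by
  rw [stdNormalCDF_sub_eq_setIntegral hxy, ← Real.volume_real_Ioc_of_le hxy, ← smul_eq_mul,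
    ← setIntegral_const]
  refine setIntegral_mono_on (integrableOn_const measure_Ioc_lt_top.ne)
    (integrable_gaussianPDFReal 0 1).integrableOn measurableSet_Ioc fun t ht ↦ ?_
  exact gaussianPDFReal_zero_one_le_of_abs_le (abs_le.2 ⟨by linarith [ht.1], by linarith [ht.2]⟩)

lemma Kfun_le_of_mem {r V e : ℝ} (he : ∃ p x : Fin 3 → ℝ,
    (∀ i, 0 ≤ p i) ∧ (∑ i, p i = 1) ∧
    (∑ i, p i * x i = r) ∧ (∑ i, p i * x i ^ 2 - r ^ 2 ≤ V) ∧
    e = ∑ i, p i * stdNormalCDF (x i)) : Kfun r V ≤ e := by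
  refine csInf_le ⟨0, ?_⟩ he
  rintro e ⟨p, x, hp, -, -, -, rfl⟩
  exact Finset.sum_nonneg fun i _ ↦ mul_nonneg (hp i) (stdNormalCDF_nonneg _)

lemma Kfun_two_point_le {V δ a b : ℝ} (hδ₀ : 0 ≤ δ) (hδ₁ : δ ≤ 1)
    (hvar : δ * (1 - δ) * (b - a) ^ 2 ≤ V) :
    Kfun ((1 - δ) * a + δ * b) V ≤ (1 - δ) * stdNormalCDF a + δ * stdNormalCDF b := by
  apply Kfun_le_of_mem
  refine ⟨![1 - δ, δ, 0], ![a, b, 0], ?_, ?_, ?_, ?_, ?_⟩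
  · intro i
    fin_cases i <;> simp [hδ₀, hδ₁]
  all_goals simp only [Fin.sum_univ_three, Matrix.cons_val_zero, Matrix.cons_val_one,
    Matrix.cons_val_two, Matrix.head_cons, Matrix.tail_cons]
  · ring
  · ring
  · linarith [show (1 - δ) * a ^ 2 + δ * b ^ 2 + 0 * 0 ^ 2 - ((1 - δ) * a + δ * b) ^ 2
      = δ * (1 - δ) * (b - a) ^ 2 by ring]
  · ring

theorem exists_pos_Kfun_add_le (x : ℝ) {w : ℝ} (hw : 0 < w) :
    ∃ h > 0, Kfun (x + h) w ≤ stdNormalCDF x := by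
  set c := gaussianPDFReal 0 1 (|x| + 1)
  have hc : 0 < c := gaussianPDFReal_pos 0 1 _ one_ne_zero
  set h := min 1 (c * w / 4)
  have hh₀ : 0 < h := lt_min one_pos (by positivity)
  have hh₁ : h ≤ 1 := min_le_left _ _
  have hhc : h ≤ c * w / 4 := min_le_right _ _
  set δ := 4 * h ^ 2 / w
  have hδ₀ : 0 < δ := by positivity
  have hδc : δ ≤ h * c := by
    rw [div_le_iff₀ hw]
    nlinarith
  have hgap : h * c ≤ stdNormalCDF x - stdNormalCDF (x - h) := by
    have := mul_gaussianPDFReal_le_stdNormalCDF_sub (x := x - h) (y := x) (M := |x| + 1)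
      (by linarith) (by linarith [neg_abs_le x]) (by linarith [le_abs_self x])
    rwa [sub_sub_cancel] at this
  have hδ₁ : δ ≤ 1 := by
    linarith [stdNormalCDF_le_one x, stdNormalCDF_nonneg (x - h)]
  set b := x - h + 2 * h / δ
  have hmean : (1 - δ) * (x - h) + δ * b = x + h := by
    simp only [b]
    field_simp
    ring
  have hvar : δ * (1 - δ) * (b - (x - h)) ^ 2 ≤ w := by
    have : δ * (1 - δ) * (b - (x - h)) ^ 2 = (1 - δ) * w := by
      simp only [b, δ]
      field_simp
      ring
    nlinarith
  refine ⟨h, hh₀, ?_⟩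
  calc Kfun (x + h) w = Kfun ((1 - δ) * (x - h) + δ * b) w := by rw [hmean]
    _ ≤ (1 - δ) * stdNormalCDF (x - h) + δ * stdNormalCDF b := Kfun_two_point_le hδ₀.le hδ₁ hvar
    _ ≤ stdNormalCDF (x - h) + δ := by
      nlinarith [stdNormalCDF_nonneg (x - h), stdNormalCDF_le_one b]
    _ ≤ stdNormalCDF x := by linarith

/-- For every `ε ∈ (0,1)`, `v > 0` and `w > 0` there exists `r > √v·Φ⁻¹(ε)` with
`𝒦(r/√v, w) ≤ ε`. -/
theorem stmt_1 (Φinv : ℝ → ℝ)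
    (hΦinv : ∀ y ∈ Set.Ioo (0 : ℝ) 1, stdNormalCDF (Φinv y) = y)
    (ε v w : ℝ) (hε : ε ∈ Set.Ioo (0 : ℝ) 1) (hv : 0 < v) (hw : 0 < w) :
    ∃ r : ℝ, Real.sqrt v * Φinv ε < r ∧ Kfun (r / Real.sqrt v) w ≤ ε := by
  obtain ⟨h, hh, hK⟩ := exists_pos_Kfun_add_le (Φinv ε) hw
  have hsv : 0 < Real.sqrt v := Real.sqrt_pos.2 hv
  refine ⟨Real.sqrt v * (Φinv ε + h), by nlinarith, ?_⟩
  rw [mul_div_cancel_left₀ _ hsv.ne']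
  exact hK.trans_eq (hΦinv ε hε)
end
end

section
/- Let Γ₀ < Γ < Γ*, let P* be any maximizer achieving C(Γ) (i.e., P* is a probability vector on 𝒜 with c(P*) ≤ Γ and I(P*,W) = C(Γ)), and set Q* := P*W; assume Q*(b) > 0 for all b ∈ ℬ. Assume the capacity-cost function C is differentiable at Γ with derivative λ = C′(Γ). Then for every a ∈ 𝒜: Σ_{b∈ℬ} W(b|a)·log(W(b|a)/Q*(b)) ≤ C(Γ) − λ·(Γ − c(a)), where summands with W(b|a) = 0 read as 0. (Equivalently, E[i(X,Y)|X] ≤ C(Γ) − C′(Γ)(Γ − c(X)) almost surely for any input random variable X, where i(a,b) = log(W(b|a)/Q*(b)) and Y is the channel output for input X.) -/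
/-!
Mix a capacity-cost achiever `P*` with the point mass at `a`: `P_t = P* + t (δ_a - P*)` costs at
most `Γ + t (c(a) - Γ)`, so `I(P_t, W) ≤ C(Γ + t (c(a) - Γ))` for `t ∈ [0, 1]`, with equality at
`t = 0`. Hence the right derivatives at `0` compare. On the right this is `C'(Γ) (c(a) - Γ)`; on the
left it is `D(W(·|a) ‖ Q*) - I(P*, W)`, since the first-order change of the output distribution
contributes `Σ_b (δ_a W - Q*)(b) = 0`.
-/

open scoped BigOperators

noncomputable section
namespace Paper

variable {𝒜 ℬ : Type*} [Fintype 𝒜] [Fintype ℬ] [Nonempty 𝒜] [Nonempty ℬ]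

/-- `W` is a channel from `𝒜` to `ℬ`. -/
def IsChannel (W : 𝒜 → ℬ → ℝ) : Prop :=
  (∀ a b, 0 ≤ W a b) ∧ ∀ a, ∑ b, W a b = 1

/-- `P` is a probability vector on `𝒜`. -/
def IsProbVec (P : 𝒜 → ℝ) : Prop := (∀ a, 0 ≤ P a) ∧ ∑ a, P a = 1

/-- Average cost `c(P) = Σ_a P(a)c(a)`. -/
def avgCost (c : 𝒜 → ℝ) (P : 𝒜 → ℝ) : ℝ := ∑ a, P a * c a

/-- Output distribution `PW(b) = Σ_a P(a)W(b|a)`. -/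
def outDist (W : 𝒜 → ℬ → ℝ) (P : 𝒜 → ℝ) (b : ℬ) : ℝ := ∑ a, P a * W a b

/-- Mutual information `I(P,W)`; summands with `P(a)W(b|a) = 0` vanish. -/
def mutInfo (W : 𝒜 → ℬ → ℝ) (P : 𝒜 → ℝ) : ℝ :=
  ∑ a, ∑ b, P a * W a b * Real.log (W a b / outDist W P b)

/-- The capacity-cost function `C(Γ)`. -/
def capacityCost (W : 𝒜 → ℬ → ℝ) (c : 𝒜 → ℝ) (Γ : ℝ) : ℝ :=
  sSup {x : ℝ | ∃ P : 𝒜 → ℝ, IsProbVec P ∧ avgCost c P ≤ Γ ∧ mutInfo W P = x}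

/-- The unconstrained capacity `max_P I(P,W)`. -/
def capacity (W : 𝒜 → ℬ → ℝ) : ℝ :=
  sSup {x : ℝ | ∃ P : 𝒜 → ℝ, IsProbVec P ∧ mutInfo W P = x}

/-- `Γ₀ = min_a c(a)`. -/
def Gamma0 (c : 𝒜 → ℝ) : ℝ := ⨅ a, c a

/-- `Γ* = inf{Γ : C(Γ) = max_P I(P,W)}`. -/
def GammaStar (W : 𝒜 → ℬ → ℝ) (c : 𝒜 → ℝ) : ℝ :=
  sInf {Γ : ℝ | capacityCost W c Γ = capacity W}

/-- `Π*`: the set of capacity-cost-achieving input distributions at cost `Γ`. -/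
def capAchievers (W : 𝒜 → ℬ → ℝ) (c : 𝒜 → ℝ) (Γ : ℝ) : Set (𝒜 → ℝ) :=
  {P | IsProbVec P ∧ avgCost c P ≤ Γ ∧ mutInfo W P = capacityCost W c Γ}

/-- `ν_a`: the conditional information variance of input letter `a` w.r.t. output law `Q`. -/
def nu (W : 𝒜 → ℬ → ℝ) (Q : ℬ → ℝ) (a : 𝒜) : ℝ :=
  ∑ b, W a b * (Real.log (W a b / Q b)) ^ 2
    - (∑ b, W a b * Real.log (W a b / Q b)) ^ 2

/-- ℓ¹ distance between probability vectors. -/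
def l1dist (P Q : 𝒜 → ℝ) : ℝ := ∑ a, |P a - Q a|

open Filter Topology

lemma _root_.HasDerivAt.le_of_eventually_le_nhdsGT {f g : ℝ → ℝ} {f' g' x : ℝ}
    (hf : HasDerivAt f f' x) (hg : HasDerivAt g g' x) (hfg : f x = g x)
    (hle : ∀ᶠ t in 𝓝[>] x, f t ≤ g t) : f' ≤ g' := by
  have hslope := ((hg.sub hf).tendsto_slope).mono_left (nhdsGT_le_nhdsNE x)
  rw [← sub_nonneg]
  refine ge_of_tendsto hslope ?_
  filter_upwards [hle, self_mem_nhdsWithin] with t ht (hxt : x < t)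
  rw [slope_def_field]
  exact div_nonneg (by simp only [Pi.sub_apply]; linarith) (sub_nonneg.2 hxt.le)

lemma mul_log_div_le {x w q : ℝ} (hx : 0 ≤ x) (hw : 0 ≤ w) (hxq : x * w ≤ q) :
    x * w * Real.log (w / q) ≤ w := by
  have hxw : 0 ≤ x * w := mul_nonneg hx hw
  have hq : 0 ≤ q := hxw.trans hxq
  rcases (div_nonneg hw hq).eq_or_lt with h | h
  · rw [← h, Real.log_zero, mul_zero]
    exact hw
  calc x * w * Real.log (w / q) ≤ x * w * (w / q - 1) :=
        mul_le_mul_of_nonneg_left (Real.log_le_sub_one_of_pos h) hxw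
    _ ≤ x * w / q * w := by
        have : x * w * (w / q - 1) = x * w / q * w - x * w := by ring
        linarith
    _ ≤ 1 * w := mul_le_mul_of_nonneg_right (div_le_one_of_le₀ hxq hq) hw
    _ = w := one_mul w

lemma hasDerivAt_mul_log_div (p d w : ℝ) {q : ℝ} (r : ℝ) (hq : q ≠ 0) :
    HasDerivAt (fun t => (p + t * d) * w * Real.log (w / (q + t * r)))
      (d * w * Real.log (w / q) - p * w * r / q) 0 := by
  rcases eq_or_ne w 0 with rfl | hw
  · simpa using hasDerivAt_const (0 : ℝ) (0 : ℝ)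
  have hlin (u v : ℝ) : HasDerivAt (fun t : ℝ => u + t * v) v 0 := by
    simpa using ((hasDerivAt_id (0 : ℝ)).mul_const v).const_add u
  have hlog : HasDerivAt (fun t => Real.log (w / (q + t * r))) (-(r / q)) 0 := by
    have := ((hasDerivAt_const (0 : ℝ) w).fun_div (hlin q r) (by simpa using hq)).log
      (by simpa using div_ne_zero hw hq)
    convert this using 1
    simp only [zero_mul, add_zero]
    field_simp
    ring
  refine (((hlin p d).mul_const w).fun_mul hlog).congr_deriv ?_
  simp only [zero_mul, add_zero]
  ring

section

variable {α β : Type*} [Fintype α]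

lemma outDist_add_smul (W : α → β → ℝ) (P D : α → ℝ) (t : ℝ) (b : β) :
    outDist W (fun a => P a + t * D a) b = outDist W P b + t * outDist W D b := by
  simp only [outDist, add_mul, Finset.sum_add_distrib, Finset.mul_sum, mul_assoc]

lemma avgCost_add_smul (c P D : α → ℝ) (t : ℝ) :
    avgCost c (fun a => P a + t * D a) = avgCost c P + t * avgCost c D := by
  simp only [avgCost, add_mul, Finset.sum_add_distrib, Finset.mul_sum, mul_assoc]

lemma IsProbVec.add_smul_sub {P R : α → ℝ} (hP : IsProbVec P) (hR : IsProbVec R) {t : ℝ}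
    (ht₀ : 0 ≤ t) (ht₁ : t ≤ 1) : IsProbVec (fun a => P a + t * (R a - P a)) := by
  refine ⟨fun a => ?_, ?_⟩
  · nlinarith [hP.1 a, hR.1 a]
  · simp only [Finset.sum_add_distrib, ← Finset.mul_sum, Finset.sum_sub_distrib, hP.2, hR.2]
    ring

lemma isProbVec_pi_single [DecidableEq α] (a : α) : IsProbVec (Pi.single a (1 : ℝ)) :=
  ⟨fun a' => by by_cases h : a' = a <;> simp [h], by simp⟩

variable [Fintype β]

def relEntropy (p q : β → ℝ) : ℝ := ∑ b, p b * Real.log (p b / q b)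

lemma mutInfo_eq_sum_relEntropy (W : α → β → ℝ) (P : α → ℝ) :
    mutInfo W P = ∑ a, P a * relEntropy (W a) (outDist W P) := by
  simp only [mutInfo, relEntropy, Finset.mul_sum, mul_assoc]

lemma mutInfo_le_card {W : α → β → ℝ} (hW : IsChannel W) {P : α → ℝ} (hP : ∀ a, 0 ≤ P a) :
    mutInfo W P ≤ Fintype.card α := by
  obtain ⟨hW0, hW1⟩ := hW
  have hPW_le (a : α) (b : β) : P a * W a b ≤ outDist W P b :=
    Finset.single_le_sum (f := fun a => P a * W a b)
      (fun a _ => mul_nonneg (hP a) (hW0 a b)) (Finset.mem_univ a)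
  calc mutInfo W P ≤ ∑ a, ∑ b, W a b := Finset.sum_le_sum fun a _ => Finset.sum_le_sum fun b _ =>
        mul_log_div_le (hP a) (hW0 a b) (hPW_le a b)
    _ = Fintype.card α := by simp [hW1]

lemma mutInfo_le_capacityCost {W : α → β → ℝ} (hW : IsChannel W) (c : α → ℝ) {Γ : ℝ}
    {P : α → ℝ} (hP : IsProbVec P) (hcost : avgCost c P ≤ Γ) :
    mutInfo W P ≤ capacityCost W c Γ := by
  refine le_csSup ⟨Fintype.card α, ?_⟩ ⟨P, hP, hcost, rfl⟩
  rintro _ ⟨P', hP', -, rfl⟩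
  exact mutInfo_le_card hW hP'.1

lemma hasDerivAt_mutInfo_add_smul {W : α → β → ℝ} (hW : IsChannel W) {P : α → ℝ}
    (hQ : ∀ b, outDist W P b ≠ 0) {D : α → ℝ} (hD : ∑ a, D a = 0) :
    HasDerivAt (fun t => mutInfo W (fun a => P a + t * D a))
      (∑ a, D a * relEntropy (W a) (outDist W P)) 0 := by
  have hterms := HasDerivAt.fun_sum fun a (_ : a ∈ Finset.univ) =>
    HasDerivAt.fun_sum fun b (_ : b ∈ Finset.univ) =>
      hasDerivAt_mul_log_div (P a) (D a) (W a b) (outDist W D b) (hQ b)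
  simp only [← outDist_add_smul] at hterms
  refine hterms.congr_deriv ?_
  have hcorr : ∑ a, ∑ b, P a * W a b * outDist W D b / outDist W P b = 0 := by
    rw [Finset.sum_comm]
    calc ∑ b, ∑ a, P a * W a b * outDist W D b / outDist W P b = ∑ b, outDist W D b :=
          Finset.sum_congr rfl fun b _ => by
            rw [← Finset.sum_div, ← Finset.sum_mul]
            exact mul_div_cancel_left₀ _ (hQ b)
      _ = ∑ a, D a := by
          simp only [outDist]
          rw [Finset.sum_comm]
          simp [← Finset.mul_sum, hW.2]
      _ = 0 := hD
  simp only [Finset.sum_sub_distrib, hcorr, sub_zero]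
  simp only [relEntropy, Finset.mul_sum, mul_assoc]

theorem sum_mul_relEntropy_le_of_hasDerivAt {W : α → β → ℝ} (hW : IsChannel W) {c : α → ℝ}
    {Γ : ℝ} {P : α → ℝ} (hP : P ∈ capAchievers W c Γ) (hQ : ∀ b, 0 < outDist W P b) {lam : ℝ}
    (hderiv : HasDerivAt (capacityCost W c) lam Γ) {R : α → ℝ} (hR : IsProbVec R) :
    ∑ a, R a * relEntropy (W a) (outDist W P) ≤ capacityCost W c Γ - lam * (Γ - avgCost c R) := by
  obtain ⟨hPprob, hPcost, hPI⟩ := hP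
  have hD : ∑ a, (R a - P a) = 0 := by rw [Finset.sum_sub_distrib, hR.2, hPprob.2, sub_self]
  have hI := hasDerivAt_mutInfo_add_smul hW (fun b => (hQ b).ne') hD
  have hC : HasDerivAt (fun t => capacityCost W c (Γ + t * (avgCost c R - Γ)))
      (lam * (avgCost c R - Γ)) 0 := by
    have hline : HasDerivAt (fun t : ℝ => Γ + t * (avgCost c R - Γ)) (avgCost c R - Γ) 0 := by
      simpa using ((hasDerivAt_id (0 : ℝ)).mul_const _).const_add Γ
    exact hderiv.comp_of_eq 0 hline (by simp)
  have hle : ∀ᶠ t in 𝓝[>] 0, mutInfo W (fun a => P a + t * (R a - P a))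
      ≤ capacityCost W c (Γ + t * (avgCost c R - Γ)) := by
    filter_upwards [Ioc_mem_nhdsGT zero_lt_one] with t ⟨ht₀, ht₁⟩
    refine mutInfo_le_capacityCost hW c (hPprob.add_smul_sub hR ht₀.le ht₁) ?_
    have hcostR : avgCost c (fun a => R a - P a) = avgCost c R - avgCost c P := by
      simp only [avgCost, sub_mul, Finset.sum_sub_distrib]
    rw [avgCost_add_smul, hcostR]
    nlinarith
  have hderiv_le := hI.le_of_eventually_le_nhdsGT hC (by simpa using hPI) hle
  rw [← hPI, mutInfo_eq_sum_relEntropy]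
  simp only [sub_mul, Finset.sum_sub_distrib] at hderiv_le
  linarith

end

theorem stmt_7_general (W : 𝒜 → ℬ → ℝ) (hW : IsChannel W) (c : 𝒜 → ℝ)
    (Γ : ℝ)
    (Pstar : 𝒜 → ℝ) (hPstar : Pstar ∈ capAchievers W c Γ)
    (hQ : ∀ b, 0 < outDist W Pstar b)
    (lam : ℝ) (hderiv : HasDerivAt (capacityCost W c) lam Γ) :
    ∀ a, ∑ b, W a b * Real.log (W a b / outDist W Pstar b)
      ≤ capacityCost W c Γ - lam * (Γ - c a) := by
  classical
  intro a
  simpa [Pi.single_apply, avgCost, relEntropy] using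
    sum_mul_relEntropy_le_of_hasDerivAt hW hPstar hQ hderiv (isProbVec_pi_single a)

/-- Lemma 2 of the paper: if `C` is differentiable at `Γ` with derivative `λ`, then for every
input letter `a`, `Σ_b W(b|a)·log(W(b|a)/Q*(b)) ≤ C(Γ) − λ·(Γ − c(a))`. -/
theorem stmt_7 (W : 𝒜 → ℬ → ℝ) (hW : IsChannel W) (c : 𝒜 → ℝ) (cmax : ℝ)
    (hc : ∀ a, 0 ≤ c a ∧ c a ≤ cmax)
    (Γ : ℝ) (hΓ₁ : Gamma0 c < Γ) (hΓ₂ : Γ < GammaStar W c)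
    (Pstar : 𝒜 → ℝ) (hPstar : Pstar ∈ capAchievers W c Γ)
    (hQ : ∀ b, 0 < outDist W Pstar b)
    (lam : ℝ) (hderiv : HasDerivAt (capacityCost W c) lam Γ) :
    ∀ a, ∑ b, W a b * Real.log (W a b / outDist W Pstar b)
      ≤ capacityCost W c Γ - lam * (Γ - c a) :=
  stmt_7_general W hW c Γ Pstar hPstar hQ lam hderiv

end Paper
end
end

section
/- Fix n ≥ 1, ρ > 0, ε ∈ (0,1) and Γ with Γ₀ < Γ < Γ*. Define δ := 1 − ε − sup_F inf_{q} (F∘W)( { (xⁿ,yⁿ) : Π_{k=1}^n W(y_k|x_k) > ρ·q(yⁿ) } ), where the supremum is over all controllers F that place full mass on inputs of average cost at most Γ, i.e. (F∘W)({(xⁿ,yⁿ) : (1/n)Σ_k c(x_k) ≤ Γ}) = 1, and the infimum is over all probability vectors q on ℬⁿ. If δ > 0, then log M*_fb(n,ε,Γ) ≤ log ρ − log δ. -/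
/-!
A feedback code `(f, g)` with `M` messages induces a controller: draw the message uniformly and
transmit its codeword. The induced joint law is `(1/M) Σ_m 1{xⁿ = f_m(yⁿ)} P_m(yⁿ)`, and it meets
the cost constraint almost surely. For any output law `q`, on the decoding region of `m` either
`P_m > ρ q` or `P_m ≤ ρ q`, so `1 − ε ≤ P(correct) ≤ (F∘W)(W(Yⁿ|Xⁿ) > ρ q(Yⁿ)) + ρ/M`. Taking the
infimum over `q` gives `δ ≤ ρ/M` for every code, i.e. `M*_fb · δ ≤ ρ`.
-/

open scoped BigOperators

noncomputable section
namespace Paper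

variable {𝒜 ℬ : Type*} [Fintype 𝒜] [Fintype ℬ] [Nonempty 𝒜] [Nonempty ℬ]

/-- The standard normal CDF. -/
def stdNormalCDF (x : ℝ) : ℝ :=
  ∫ t in Set.Iic x, Real.exp (-t ^ 2 / 2) / Real.sqrt (2 * Real.pi)

section Feedback

variable [DecidableEq 𝒜] [DecidableEq ℬ]

/-- Causality of a feedback encoder for one message: the input at time `k` depends only on
the first `k−1` channel outputs. -/
def CausalEnc {n : ℕ} (f : (Fin n → ℬ) → Fin n → 𝒜) : Prop :=
  ∀ y y' : Fin n → ℬ, ∀ k : Fin n, (∀ i : Fin n, i < k → y i = y' i) → f y k = f y' k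

/-- The output law `P_m(yⁿ) = Π_k W(y_k | f_k(m, y^{k−1}))` induced by a feedback encoder. -/
def outLaw (W : 𝒜 → ℬ → ℝ) {n M : ℕ} (f : Fin M → (Fin n → ℬ) → Fin n → 𝒜)
    (m : Fin M) (y : Fin n → ℬ) : ℝ :=
  ∏ k, W (f m y k) (y k)

/-- Average error probability of a deterministic feedback code. -/
def errProbFB (W : 𝒜 → ℬ → ℝ) {n M : ℕ} (f : Fin M → (Fin n → ℬ) → Fin n → 𝒜)
    (g : (Fin n → ℬ) → Fin M) : ℝ :=
  (M : ℝ)⁻¹ * ∑ m : Fin M, ∑ y : Fin n → ℬ, if g y = m then 0 else outLaw W f m y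

/-- Almost-sure cost constraint for a feedback code: on every output sequence of positive
probability the transmitted sequence has average cost at most `Γ`. -/
def ASCostFB (W : 𝒜 → ℬ → ℝ) (c : 𝒜 → ℝ) (Γ : ℝ) {n M : ℕ}
    (f : Fin M → (Fin n → ℬ) → Fin n → 𝒜) : Prop :=
  ∀ m y, 0 < outLaw W f m y → ∑ k, c (f m y k) ≤ n * Γ

/-- `M*_fb(n,ε,Γ)`: the largest message-set size of a feedback code with a.s. cost
constraint `Γ` and average error probability at most `ε`. -/
def MstarFB (W : 𝒜 → ℬ → ℝ) (c : 𝒜 → ℝ) (n : ℕ) (ε Γ : ℝ) : ℕ :=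
  sSup {M : ℕ | ∃ f : Fin M → (Fin n → ℬ) → Fin n → 𝒜, ∃ g : (Fin n → ℬ) → Fin M,
    (∀ m, CausalEnc (f m)) ∧ ASCostFB W c Γ f ∧ errProbFB W f g ≤ ε}

open scoped Classical

/-- A controller: for each time `k` it maps the past inputs `x^k` and outputs `y^k` to a
distribution on the next input. -/
def Ctrl (𝒜 ℬ : Type*) (n : ℕ) : Type _ :=
  ∀ k : Fin n, (Fin k.val → 𝒜) → (Fin k.val → ℬ) → 𝒜 → ℝ

/-- Restriction of a length-`n` sequence to the times before `k`. -/
def pre {α : Type*} {n : ℕ} (x : Fin n → α) (k : Fin n) : Fin k.val → α :=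
  fun i => x ⟨i.val, i.isLt.trans k.isLt⟩

/-- Every row of a controller is a probability vector. -/
def IsController {n : ℕ} (F : Ctrl 𝒜 ℬ n) : Prop :=
  ∀ (k : Fin n) (xs : Fin k.val → 𝒜) (ys : Fin k.val → ℬ),
    (∀ a, 0 ≤ F k xs ys a) ∧ ∑ a, F k xs ys a = 1

/-- The joint law `(F∘W)(xⁿ,yⁿ) = Π_k F(x_k|x^{k−1},y^{k−1})·W(y_k|x_k)`. -/
def ctrlLaw (W : 𝒜 → ℬ → ℝ) {n : ℕ} (F : Ctrl 𝒜 ℬ n)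
    (x : Fin n → 𝒜) (y : Fin n → ℬ) : ℝ :=
  ∏ k, F k (pre x k) (pre y k) (x k) * W (x k) (y k)


section Sequences

variable {α β : Type*}

theorem sum_prod_pre_eq_one [Fintype α] :
    ∀ (n : ℕ) (K : ∀ k : Fin n, (Fin k.val → α) → α → ℝ), (∀ k xs, ∑ a, K k xs a = 1) →
      ∑ x : Fin n → α, ∏ k, K k (pre x k) (x k) = 1
  | 0, _, _ => by simp
  | n + 1, K, hK => by
    have hsnoc (a : α) (xs : Fin n → α) : Fin.snocEquiv (fun _ => α) (a, xs) = Fin.snoc xs a :=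
      rfl
    have hpre (xs : Fin n → α) (a : α) (k : Fin n) :
        pre (Fin.snoc xs a : Fin (n + 1) → α) k.castSucc = pre xs k := by
      funext i
      exact Fin.snoc_castSucc (α := fun _ => α) (i := ⟨i, i.isLt.trans k.isLt⟩) ..
    have hpre_last (xs : Fin n → α) (a : α) :
        pre (Fin.snoc xs a : Fin (n + 1) → α) (Fin.last n) = xs := by
      funext i
      exact Fin.snoc_castSucc (α := fun _ => α) (i := i) ..
    rw [← (Fin.snocEquiv fun _ => α).sum_comp, Fintype.sum_prod_type, Finset.sum_comm]
    simp only [hsnoc, Fin.prod_univ_castSucc, hpre, hpre_last, Fin.snoc_castSucc,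
      Fin.snoc_last, ← Finset.mul_sum, hK, mul_one]
    exact sum_prod_pre_eq_one n (fun k => K k.castSucc) (fun k => hK k.castSucc)

def fillPre {n : ℕ} (d : α) (k : Fin n) (zs : Fin k.val → α) : Fin n → α :=
  fun i => if h : i.val < k.val then zs ⟨i.val, h⟩ else d

theorem fillPre_pre_of_lt {n : ℕ} (d : α) (z : Fin n → α) {k i : Fin n} (h : i < k) :
    fillPre d k (pre z k) i = z i := by
  simp [fillPre, pre, Fin.lt_def.mp h]

theorem CausalEnc.apply_fillPre_pre {n : ℕ} {f : (Fin n → β) → Fin n → α} (hf : CausalEnc f)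
    (b₀ : β) (y : Fin n → β) {i k : Fin n} (h : i ≤ k) : f (fillPre b₀ k (pre y k)) i = f y i :=
  hf _ y i fun _ hj => fillPre_pre_of_lt b₀ y (hj.trans_le h)

end Sequences

section Laws

variable {α β : Type*} {n : ℕ} {W : α → β → ℝ}

theorem sum_prod_channel_eq_one_of_causal [Fintype β] [Nonempty β] (hW : IsChannel W)
    {f : (Fin n → β) → Fin n → α} (hf : CausalEnc f) :
    ∑ y : Fin n → β, ∏ k, W (f y k) (y k) = 1 := by
  obtain ⟨b₀⟩ := ‹Nonempty β›
  rw [← sum_prod_pre_eq_one n (fun k ys b => W (f (fillPre b₀ k ys) k) b) fun _ _ => hW.2 _]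
  refine Finset.sum_congr rfl fun y _ => Finset.prod_congr rfl fun k _ => ?_
  rw [hf.apply_fillPre_pre b₀ y le_rfl]

theorem ctrlLaw_nonneg [Fintype α] [Fintype β] (hW : IsChannel W) {F : Ctrl α β n}
    (hF : IsController F) (x : Fin n → α) (y : Fin n → β) : 0 ≤ ctrlLaw W F x y :=
  Finset.prod_nonneg fun k _ => mul_nonneg ((hF k _ _).1 _) (hW.1 _ _)

theorem sum_ctrlLaw_eq_one [Fintype α] [Fintype β] (hW : IsChannel W) {F : Ctrl α β n}
    (hF : IsController F) : ∑ x : Fin n → α, ∑ y : Fin n → β, ctrlLaw W F x y = 1 := by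
  have hK (k : Fin n) (zs : Fin k.val → α × β) :
      ∑ p : α × β, F k (fun i => (zs i).1) (fun i => (zs i).2) p.1 * W p.1 p.2 = 1 := by
    simp only [Fintype.sum_prod_type, ← Finset.mul_sum, hW.2, mul_one, (hF k _ _).2]
  rw [← sum_prod_pre_eq_one n _ hK, ← Fintype.sum_prod_type',
    ← (Equiv.arrowProdEquivProdArrow (Fin n) (fun _ => α) (fun _ => β)).sum_comp]
  rfl

/-- `threshProb W ρ F q` is `(F∘W)(W(Yⁿ|Xⁿ) > ρ·q(Yⁿ))`; `metaConverseSup` is the paper's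
`sup_F inf_q` of it over controllers meeting the cost constraint almost surely. -/
def threshProb [Fintype α] [Fintype β] (W : α → β → ℝ) (ρ : ℝ) (F : Ctrl α β n)
    (q : (Fin n → β) → ℝ) : ℝ :=
  ∑ x : Fin n → α, ∑ y : Fin n → β, if ρ * q y < ∏ k, W (x k) (y k) then ctrlLaw W F x y else 0

variable (n) in
def metaConverseSup [Fintype α] [Fintype β] (W : α → β → ℝ) (c : α → ℝ) (Γ ρ : ℝ) : ℝ :=
  sSup {v : ℝ | ∃ F : Ctrl α β n, IsController F ∧
    (∑ x : Fin n → α, ∑ y : Fin n → β,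
      (if (∑ k, c (x k)) ≤ n * Γ then ctrlLaw W F x y else 0)) = 1 ∧
    v = sInf {u : ℝ | ∃ q : (Fin n → β) → ℝ, IsProbVec q ∧ u = threshProb W ρ F q}}

end Laws

section CodeController

variable {α β : Type*} {n M : ℕ} (f : Fin M → (Fin n → β) → Fin n → α)

def consistentMsgs (x : Fin n → α) (y : Fin n → β) (j : ℕ) : Finset (Fin M) :=
  Finset.univ.filter fun m => ∀ i : Fin n, i.val < j → f m y i = x i

/-- The controller of a feedback code with a uniformly distributed message: given the history,
the next input is the next codeword letter of a uniformly chosen message consistent with it (a point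
mass at `a₀` if no message is). Histories are padded to full length by `fillPre` so that the encoder
can be evaluated; by causality the padding is never read. -/
def codeCtrl (a₀ : α) (b₀ : β) : Ctrl α β n :=
  fun k xs ys a =>
    let C := consistentMsgs f (fillPre a₀ k xs) (fillPre b₀ k ys) k
    if C.card = 0 then if a = a₀ then 1 else 0
    else ((C.filter fun m => f m (fillPre b₀ k ys) k = a).card : ℝ) / C.card

theorem codeCtrl_isController [Fintype α] (a₀ : α) (b₀ : β) : IsController (codeCtrl f a₀ b₀) := by
  intro k xs ys
  simp only [codeCtrl]
  split_ifs with hC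
  · exact ⟨fun a => by split_ifs <;> norm_num, by simp⟩
  · refine ⟨fun a => by positivity, ?_⟩
    rw [← Finset.sum_div, div_eq_one_iff_eq (Nat.cast_ne_zero.mpr hC)]
    exact_mod_cast (Finset.card_eq_sum_card_fiberwise fun m _ => Finset.mem_univ _).symm

variable {f} (hf : ∀ m, CausalEnc (f m)) (a₀ : α) (b₀ : β) (x : Fin n → α) (y : Fin n → β)
include hf

theorem consistentMsgs_fillPre_pre (k : Fin n) :
    consistentMsgs f (fillPre a₀ k (pre x k)) (fillPre b₀ k (pre y k)) k
      = consistentMsgs f x y k := by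
  ext m
  simp only [consistentMsgs, Finset.mem_filter, Finset.mem_univ, true_and]
  refine forall_congr' fun i => imp_congr_right fun hi => ?_
  rw [(hf m).apply_fillPre_pre b₀ y (le_of_lt hi), fillPre_pre_of_lt a₀ x hi]

theorem card_consistentMsgs_mul_codeCtrl (k : Fin n) :
    ((consistentMsgs f x y k).card : ℝ) * codeCtrl f a₀ b₀ k (pre x k) (pre y k) (x k)
      = (consistentMsgs f x y (k + 1)).card := by
  have hnext : (consistentMsgs f x y k).filter (fun m => f m (fillPre b₀ k (pre y k)) k = x k)
      = consistentMsgs f x y (k + 1) := by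
    ext m
    simp only [consistentMsgs, Finset.mem_filter, Finset.mem_univ, true_and,
      (hf m).apply_fillPre_pre b₀ y le_rfl]
    constructor
    · rintro ⟨hlt, hk⟩ i hi
      rcases Nat.lt_succ_iff_lt_or_eq.mp hi with hi | hi
      · exact hlt i hi
      · rwa [Fin.ext hi]
    · exact fun h => ⟨fun i hi => h i (Nat.lt_succ_of_lt hi), h k (Nat.lt_succ_self _)⟩
  simp only [codeCtrl, consistentMsgs_fillPre_pre hf, hnext]
  by_cases h0 : (consistentMsgs f x y k).card = 0
  · have h1 : (consistentMsgs f x y (k + 1)).card = 0 := by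
      rw [← hnext]
      exact Nat.le_zero.mp ((Finset.card_filter_le _ _).trans h0.le)
    simp [h0, h1]
  · rw [if_neg h0]
    exact mul_div_cancel₀ _ (Nat.cast_ne_zero.mpr h0)

theorem natCast_mul_prod_codeCtrl :
    (M : ℝ) * ∏ k, codeCtrl f a₀ b₀ k (pre x k) (pre y k) (x k)
      = (consistentMsgs f x y n).card := by
  let h : ℕ → ℝ := fun r =>
    if hr : r < n then codeCtrl f a₀ b₀ ⟨r, hr⟩ (pre x ⟨r, hr⟩) (pre y ⟨r, hr⟩) (x ⟨r, hr⟩)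
    else 1
  have key : ∀ j ≤ n, (M : ℝ) * ∏ r ∈ Finset.range j, h r = (consistentMsgs f x y j).card := by
    intro j
    induction j with
    | zero => simp [consistentMsgs]
    | succ j ih =>
      intro hj
      have hj' : h j = codeCtrl f a₀ b₀ ⟨j, hj⟩ (pre x ⟨j, hj⟩) (pre y ⟨j, hj⟩) (x ⟨j, hj⟩) :=
        dif_pos hj
      rw [Finset.prod_range_succ, ← mul_assoc, ih (by omega), hj']
      exact card_consistentMsgs_mul_codeCtrl hf a₀ b₀ x y ⟨j, hj⟩
  rw [← key n le_rfl, ← Fin.prod_univ_eq_prod_range]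
  simp [h]

theorem ctrlLaw_codeCtrl (W : α → β → ℝ) (hM : 0 < M) :
    ctrlLaw W (codeCtrl f a₀ b₀) x y
      = (M : ℝ)⁻¹ * ∑ m, if f m y = x then outLaw W f m y else 0 := by
  have hcard : ((consistentMsgs f x y n).card : ℝ) = ∑ m, if f m y = x then 1 else 0 := by
    simp only [consistentMsgs, Finset.natCast_card_filter, Fin.is_lt, true_implies, funext_iff]
  have hM' : (M : ℝ) ≠ 0 := by positivity
  calc ctrlLaw W (codeCtrl f a₀ b₀) x y
      = (∏ k, codeCtrl f a₀ b₀ k (pre x k) (pre y k) (x k)) * ∏ k, W (x k) (y k) :=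
        Finset.prod_mul_distrib
    _ = (M : ℝ)⁻¹ * ((consistentMsgs f x y n).card * ∏ k, W (x k) (y k)) := by
        rw [← natCast_mul_prod_codeCtrl hf a₀ b₀ x y]
        field_simp
    _ = (M : ℝ)⁻¹ * ∑ m, if f m y = x then outLaw W f m y else 0 := by
        rw [hcard, Finset.sum_mul]
        refine congrArg _ (Finset.sum_congr rfl fun m _ => ?_)
        split_ifs with hm
        · rw [one_mul, outLaw, hm]
        · rw [zero_mul]

theorem sum_ite_ctrlLaw_codeCtrl (W : α → β → ℝ) (hM : 0 < M) [Fintype α] [Fintype β]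
    (p : (Fin n → α) → (Fin n → β) → Prop) :
    ∑ x, ∑ y, (if p x y then ctrlLaw W (codeCtrl f a₀ b₀) x y else 0)
      = (M : ℝ)⁻¹ * ∑ m, ∑ y, if p (f m y) y then outLaw W f m y else 0 := by
  have hx (x : Fin n → α) (y : Fin n → β) :
      (if p x y then ctrlLaw W (codeCtrl f a₀ b₀) x y else 0)
        = (M : ℝ)⁻¹ * ∑ m, if f m y = x then (if p x y then outLaw W f m y else 0) else 0 := by
    rw [ctrlLaw_codeCtrl hf a₀ b₀ x y W hM]
    split_ifs <;> simp [*]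
  simp only [hx, ← Finset.mul_sum]
  congr 1
  rw [Finset.sum_comm]
  refine (Finset.sum_congr rfl fun y _ => Finset.sum_comm).trans ?_
  simp only [Finset.sum_ite_eq, Finset.mem_univ, if_true]
  exact Finset.sum_comm

end CodeController

section MetaConverseSup

variable {α β : Type*} [Fintype α] [Fintype β] {n : ℕ} {W : α → β → ℝ} {F : Ctrl α β n}
  {ρ : ℝ} {q : (Fin n → β) → ℝ}

theorem isProbVec_uniform (Y : Type*) [Fintype Y] [Nonempty Y] :
    IsProbVec fun _ : Y => (Fintype.card Y : ℝ)⁻¹ :=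
  ⟨fun _ => by positivity, by simp⟩

theorem threshProb_nonneg (hW : IsChannel W) (hF : IsController F) :
    0 ≤ threshProb W ρ F q :=
  Finset.sum_nonneg fun x _ => Finset.sum_nonneg fun y _ => by
    split_ifs
    exacts [ctrlLaw_nonneg hW hF x y, le_rfl]

theorem threshProb_le_one (hW : IsChannel W) (hF : IsController F) :
    threshProb W ρ F q ≤ 1 := by
  rw [← sum_ctrlLaw_eq_one hW hF]
  refine Finset.sum_le_sum fun x _ => Finset.sum_le_sum fun y _ => ?_
  split_ifs
  exacts [le_rfl, ctrlLaw_nonneg hW hF x y]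

theorem le_metaConverseSup [Nonempty β] (hW : IsChannel W) {c : α → ℝ} {Γ : ℝ}
    (hF : IsController F)
    (hmass : ∑ x : Fin n → α, ∑ y : Fin n → β,
      (if (∑ k, c (x k)) ≤ n * Γ then ctrlLaw W F x y else 0) = 1)
    {b : ℝ} (hb : ∀ q, IsProbVec q → b ≤ threshProb W ρ F q) :
    b ≤ metaConverseSup n W c Γ ρ := by
  have hne (F' : Ctrl α β n) :
      {u : ℝ | ∃ q : (Fin n → β) → ℝ, IsProbVec q ∧ u = threshProb W ρ F' q}.Nonempty :=
    Set.nonempty_of_mem ⟨_, isProbVec_uniform (Fin n → β), rfl⟩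
  unfold metaConverseSup
  refine (le_csInf (hne F) ?_).trans (le_csSup ?_ ⟨F, hF, hmass, rfl⟩)
  · rintro _ ⟨q, hq, rfl⟩
    exact hb q hq
  · refine ⟨1, ?_⟩
    rintro _ ⟨F', hF', -, rfl⟩
    refine (csInf_le ⟨0, ?_⟩ ?_).trans
      (threshProb_le_one hW hF' (ρ := ρ) (q := fun _ => (Fintype.card (Fin n → β) : ℝ)⁻¹))
    · rintro _ ⟨q, -, rfl⟩
      exact threshProb_nonneg hW hF'
    · exact ⟨_, isProbVec_uniform _, rfl⟩

end MetaConverseSup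

section MetaConverse

/-- On the decoding region of `m`, either `P m y > ρ q y` or `P m y ≤ ρ q y`; the decoding regions
partition `Y`, so together they have `q`-mass one. -/
theorem sum_ite_eq_le_sum_ite_lt_add {ι Y : Type*} [Fintype ι] [DecidableEq ι] [Fintype Y]
    {P : ι → Y → ℝ} (g : Y → ι) {q : Y → ℝ} (hq : IsProbVec q) {ρ : ℝ} (hρ : 0 ≤ ρ) :
    ∑ m, ∑ y, (if g y = m then P m y else 0)
      ≤ ∑ m, ∑ y, (if ρ * q y < P m y then P m y else 0) + ρ := by
  have hpoint (m : ι) (y : Y) : (if g y = m then P m y else 0)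
      ≤ (if ρ * q y < P m y then P m y else 0) + ρ * (if g y = m then q y else 0) := by
    have := mul_nonneg hρ (hq.1 y)
    split_ifs <;> linarith
  have hq_fibres : ∑ m, ∑ y, (if g y = m then q y else 0) = 1 := by
    rw [Finset.sum_comm]
    simpa [Finset.sum_ite_eq] using hq.2
  calc ∑ m, ∑ y, (if g y = m then P m y else 0)
      ≤ ∑ m, ∑ y, ((if ρ * q y < P m y then P m y else 0) + ρ * (if g y = m then q y else 0)) :=
        Finset.sum_le_sum fun m _ => Finset.sum_le_sum fun y _ => hpoint m y
    _ = _ := by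
        simp only [Finset.sum_add_distrib, ← Finset.mul_sum, hq_fibres, mul_one]

variable {α β : Type*} {n M : ℕ} {W : α → β → ℝ} {f : Fin M → (Fin n → β) → Fin n → α}

theorem sum_outLaw_eq_one [Fintype β] [Nonempty β] (hW : IsChannel W)
    (hf : ∀ m, CausalEnc (f m)) (m : Fin M) : ∑ y, outLaw W f m y = 1 :=
  sum_prod_channel_eq_one_of_causal hW (hf m)

theorem one_sub_errProbFB [Fintype β] [Nonempty β] (hW : IsChannel W)
    (hf : ∀ m, CausalEnc (f m)) (hM : 0 < M) (g : (Fin n → β) → Fin M) :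
    1 - errProbFB W f g = (M : ℝ)⁻¹ * ∑ m, ∑ y, if g y = m then outLaw W f m y else 0 := by
  have hsplit (m : Fin M) : ∑ y, (if g y = m then 0 else outLaw W f m y)
      + ∑ y, (if g y = m then outLaw W f m y else 0) = 1 := by
    rw [← Finset.sum_add_distrib, ← sum_outLaw_eq_one hW hf m]
    refine Finset.sum_congr rfl fun y _ => ?_
    split_ifs <;> simp [outLaw]
  have htotal : errProbFB W f g + (M : ℝ)⁻¹ * ∑ m, ∑ y, (if g y = m then outLaw W f m y else 0)
      = 1 := by
    rw [errProbFB, ← mul_add, ← Finset.sum_add_distrib]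
    simp only [hsplit, Finset.sum_const, Finset.card_univ, Fintype.card_fin, nsmul_eq_mul,
      mul_one]
    exact inv_mul_cancel₀ (by positivity)
  linarith

theorem threshProb_codeCtrl [Fintype α] [Fintype β] (hf : ∀ m, CausalEnc (f m)) (hM : 0 < M)
    (a₀ : α) (b₀ : β) (ρ : ℝ) (q : (Fin n → β) → ℝ) :
    threshProb W ρ (codeCtrl f a₀ b₀) q
      = (M : ℝ)⁻¹ * ∑ m, ∑ y, if ρ * q y < outLaw W f m y then outLaw W f m y else 0 :=
  sum_ite_ctrlLaw_codeCtrl hf a₀ b₀ W hM fun x y => ρ * q y < ∏ k, W (x k) (y k)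

theorem one_sub_sub_div_le_threshProb_codeCtrl [Fintype α] [Fintype β] [Nonempty β]
    (hW : IsChannel W) (hf : ∀ m, CausalEnc (f m)) (hM : 0 < M) {g : (Fin n → β) → Fin M}
    {ε : ℝ} (herr : errProbFB W f g ≤ ε) (a₀ : α) (b₀ : β) {ρ : ℝ} (hρ : 0 ≤ ρ)
    {q : (Fin n → β) → ℝ} (hq : IsProbVec q) :
    1 - ε - ρ / M ≤ threshProb W ρ (codeCtrl f a₀ b₀) q := by
  have hcore := sub_le_iff_le_add.mpr (sum_ite_eq_le_sum_ite_lt_add (P := outLaw W f) g hq hρ)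
  rw [threshProb_codeCtrl hf hM]
  calc 1 - ε - ρ / M ≤ 1 - errProbFB W f g - ρ / M := by linarith
    _ = (M : ℝ)⁻¹ * (∑ m, ∑ y, (if g y = m then outLaw W f m y else 0) - ρ) := by
        rw [one_sub_errProbFB hW hf hM g]
        ring
    _ ≤ _ := mul_le_mul_of_nonneg_left hcore (by positivity)

theorem sum_cost_ite_ctrlLaw_codeCtrl [Fintype α] [Fintype β] [Nonempty β] (hW : IsChannel W)
    {c : α → ℝ} {Γ : ℝ} (hf : ∀ m, CausalEnc (f m))
    (hcost : ASCostFB W c Γ f) (hM : 0 < M) (a₀ : α) (b₀ : β) :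
    ∑ x : Fin n → α, ∑ y : Fin n → β,
      (if (∑ k, c (x k)) ≤ n * Γ then ctrlLaw W (codeCtrl f a₀ b₀) x y else 0) = 1 := by
  have hcost' (m : Fin M) (y : Fin n → β) :
      (if (∑ k, c (f m y k)) ≤ n * Γ then outLaw W f m y else 0) = outLaw W f m y := by
    rcases (Finset.prod_nonneg fun k _ => hW.1 _ _ : 0 ≤ outLaw W f m y).eq_or_lt with h | h
    · split_ifs
      exacts [rfl, h]
    · rw [if_pos (hcost m y h)]
  rw [sum_ite_ctrlLaw_codeCtrl hf a₀ b₀ W hM fun x _ => (∑ k, c (x k)) ≤ n * Γ]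
  simp only [hcost', sum_outLaw_eq_one hW hf, Finset.sum_const, Finset.card_univ,
    Fintype.card_fin, nsmul_eq_mul, mul_one]
  exact inv_mul_cancel₀ (by positivity)

end MetaConverse

section CodeSizes

variable {α β : Type*} [Fintype β] {n : ℕ}

def fbCodeSizes (W : α → β → ℝ) (c : α → ℝ) (n : ℕ) (ε Γ : ℝ) : Set ℕ :=
  {M : ℕ | ∃ f : Fin M → (Fin n → β) → Fin n → α, ∃ g : (Fin n → β) → Fin M,
    (∀ m, CausalEnc (f m)) ∧ ASCostFB W c Γ f ∧ errProbFB W f g ≤ ε}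

theorem natCast_mul_le_of_mem_fbCodeSizes [Fintype α] [Nonempty α] [Nonempty β]
    {W : α → β → ℝ} (hW : IsChannel W) {c : α → ℝ} {ε Γ ρ : ℝ} (hρ : 0 ≤ ρ) {M : ℕ}
    (hM : M ∈ fbCodeSizes W c n ε Γ) : (M : ℝ) * (1 - ε - metaConverseSup n W c Γ ρ) ≤ ρ := by
  obtain ⟨f, g, hf, hcost, herr⟩ := hM
  rcases M.eq_zero_or_pos with rfl | hMpos
  · simpa using hρ
  obtain ⟨a₀⟩ := ‹Nonempty α›
  obtain ⟨b₀⟩ := ‹Nonempty β›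
  have hle : 1 - ε - ρ / M ≤ metaConverseSup n W c Γ ρ :=
    le_metaConverseSup hW (codeCtrl_isController f a₀ b₀)
      (sum_cost_ite_ctrlLaw_codeCtrl hW hf hcost hMpos a₀ b₀)
      fun _ hq => one_sub_sub_div_le_threshProb_codeCtrl hW hf hMpos herr a₀ b₀ hρ hq
  calc (M : ℝ) * (1 - ε - metaConverseSup n W c Γ ρ) ≤ M * (ρ / M) := by gcongr; linarith
    _ = ρ := mul_div_cancel₀ ρ (by positivity)

theorem one_mem_fbCodeSizes [Fintype α] [Nonempty α] (W : α → β → ℝ) {c : α → ℝ} {ε Γ : ℝ}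
    (hε : 0 ≤ ε) (hΓ : Gamma0 c ≤ Γ) : 1 ∈ fbCodeSizes W c n ε Γ := by
  obtain ⟨a, ha⟩ := exists_eq_ciInf_of_finite (f := c)
  refine ⟨fun _ _ _ => a, fun _ => 0, fun _ _ _ _ _ => rfl, fun _ _ _ => ?_, ?_⟩
  · simp only [Finset.sum_const, Finset.card_univ, Fintype.card_fin, nsmul_eq_mul]
    exact mul_le_mul_of_nonneg_left (ha.trans_le hΓ) n.cast_nonneg
  · simpa [errProbFB, Subsingleton.elim _ (0 : Fin 1)] using hε

end CodeSizes

theorem log_sSup_le_of_forall_mul_le {S : Set ℕ} {δ ρ : ℝ} (h1 : 1 ∈ S) (hδ : 0 < δ)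
    (h : ∀ M ∈ S, (M : ℝ) * δ ≤ ρ) : Real.log ((sSup S : ℕ) : ℝ) ≤ Real.log ρ - Real.log δ := by
  have hle (M : ℕ) (hM : M ∈ S) : (M : ℝ) ≤ ρ / δ := (le_div_iff₀ hδ).mpr (h M hM)
  have hbdd : BddAbove S := ⟨⌊ρ / δ⌋₊, fun M hM => Nat.le_floor (hle M hM)⟩
  have hρ : 0 < ρ := hδ.trans_le (by simpa using h 1 h1)
  have hpos : (0 : ℝ) < sSup S := by exact_mod_cast le_csSup hbdd h1
  rw [← Real.log_div hρ.ne' hδ.ne']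
  exact Real.log_le_log hpos (hle _ (Nat.sSup_mem ⟨1, h1⟩ hbdd))

theorem stmt_15_general (W : 𝒜 → ℬ → ℝ) (hW : IsChannel W) (c : 𝒜 → ℝ)
    (n : ℕ) (ρ : ℝ) (hρ : 0 < ρ)
    (ε : ℝ) (hε : ε ∈ Set.Ioo (0 : ℝ) 1)
    (Γ : ℝ) (hΓ₁ : Gamma0 c < Γ)
    (δ : ℝ)
    (hδdef : δ = 1 - ε - sSup {v : ℝ | ∃ F : Ctrl 𝒜 ℬ n, IsController F ∧
        (∑ x : Fin n → 𝒜, ∑ y : Fin n → ℬ,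
          (if (∑ k, c (x k)) ≤ n * Γ then ctrlLaw W F x y else 0)) = 1 ∧
        v = sInf {u : ℝ | ∃ q : (Fin n → ℬ) → ℝ,
          ((∀ y, 0 ≤ q y) ∧ ∑ y : Fin n → ℬ, q y = 1) ∧
          u = ∑ x : Fin n → 𝒜, ∑ y : Fin n → ℬ,
            (if ρ * q y < ∏ k, W (x k) (y k) then ctrlLaw W F x y else 0)}})
    (hδ : 0 < δ) :
    Real.log (MstarFB W c n ε Γ) ≤ Real.log ρ - Real.log δ := by
  change δ = 1 - ε - metaConverseSup n W c Γ ρ at hδdef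
  subst hδdef
  exact log_sSup_le_of_forall_mul_le (one_mem_fbCodeSizes W hε.1.le hΓ₁.le) hδ
    fun _ hM => natCast_mul_le_of_mem_fbCodeSizes hW hρ.le hM

/-- Lemma 1 of the paper (meta-converse with feedback under the a.s. cost constraint):
if `δ := 1 − ε − sup_F inf_q (F∘W)(W(Yⁿ|Xⁿ) > ρ·q(Yⁿ)) > 0`, where the supremum is over
controllers putting full mass on inputs of average cost at most `Γ`, then
`log M*_fb(n,ε,Γ) ≤ log ρ − log δ`. -/
theorem stmt_15 (W : 𝒜 → ℬ → ℝ) (hW : IsChannel W) (c : 𝒜 → ℝ) (cmax : ℝ)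
    (hc : ∀ a, 0 ≤ c a ∧ c a ≤ cmax)
    (n : ℕ) (hn : 1 ≤ n) (ρ : ℝ) (hρ : 0 < ρ)
    (ε : ℝ) (hε : ε ∈ Set.Ioo (0 : ℝ) 1)
    (Γ : ℝ) (hΓ₁ : Gamma0 c < Γ) (hΓ₂ : Γ < GammaStar W c)
    (δ : ℝ)
    (hδdef : δ = 1 - ε - sSup {v : ℝ | ∃ F : Ctrl 𝒜 ℬ n, IsController F ∧
        (∑ x : Fin n → 𝒜, ∑ y : Fin n → ℬ,
          (if (∑ k, c (x k)) ≤ n * Γ then ctrlLaw W F x y else 0)) = 1 ∧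
        v = sInf {u : ℝ | ∃ q : (Fin n → ℬ) → ℝ,
          ((∀ y, 0 ≤ q y) ∧ ∑ y : Fin n → ℬ, q y = 1) ∧
          u = ∑ x : Fin n → 𝒜, ∑ y : Fin n → ℬ,
            (if ρ * q y < ∏ k, W (x k) (y k) then ctrlLaw W F x y else 0)}})
    (hδ : 0 < δ) :
    Real.log (MstarFB W c n ε Γ) ≤ Real.log ρ - Real.log δ :=
  stmt_15_general W hW c n ρ hρ ε hε Γ hΓ₁ δ hδdef hδ

end Feedback

end Paper
end
end
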